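/- For state space {1,2} and any T ≥ 2, let x be a contingency table with total frequency n, and let b_{11}(x), b_{12}(x), b_{21}(x), b_{22}(x) be its transition counts. Then the quadruple (b_{11}(x), b_{12}(x), b_{21}(x), b_{22}(x)) consists of nonnegative integers satisfying b_{11}+b_{12}+b_{21}+b_{22} = n(T−1) and |b_{12} − b_{21}| ≤ n. -/
import Mathlib


/-- Number of transitions from state `i` to state `j` in the path `ω = (s₁,…,s_T)`
(indexed `0,…,T-1`). -/
def transCount {S : Type} [DecidableEq S] {T : ℕ} (ω : Fin T → S) (i j : S) : ℕ :=
  (Finset.univ.filter (fun t : Fin (T - 1) =>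
    ω ⟨t.1, by have := t.2; omega⟩ = i ∧ ω ⟨t.1 + 1, by have := t.2; omega⟩ = j)).card

/-- Total transition count `b_{ij}(x)` of a contingency table `x`. -/
def transTotal {S : Type} [DecidableEq S] [Fintype S] {T : ℕ}
    (x : (Fin T → S) → ℕ) (i j : S) : ℕ :=
  ∑ ω : Fin T → S, x ω * transCount ω i j

lemma fin2_cases (a : Fin 2) : a = 0 ∨ a = 1 := by
  rcases a with ⟨a, ha⟩
  interval_cases a
  · left; rfl
  · right; rfl

lemma sum4 {T : ℕ} (ω : Fin T → Fin 2) :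
    transCount ω 0 0 + transCount ω 0 1 + transCount ω 1 0 + transCount ω 1 1 = T - 1 := by
  unfold transCount
  simp only [Finset.card_filter, ← Finset.sum_add_distrib]
  have : ∀ t : Fin (T - 1),
      ((if ω ⟨t.1, by omega⟩ = 0 ∧ ω ⟨t.1 + 1, by omega⟩ = 0 then 1 else 0) +
       (if ω ⟨t.1, by omega⟩ = 0 ∧ ω ⟨t.1 + 1, by omega⟩ = 1 then 1 else 0) +
       (if ω ⟨t.1, by omega⟩ = 1 ∧ ω ⟨t.1 + 1, by omega⟩ = 0 then 1 else 0) +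
       (if ω ⟨t.1, by omega⟩ = 1 ∧ ω ⟨t.1 + 1, by omega⟩ = 1 then 1 else 0)) = 1 := by
    intro t
    rcases fin2_cases (ω ⟨t.1, by omega⟩) with h1 | h1 <;>
      rcases fin2_cases (ω ⟨t.1 + 1, by omega⟩) with h2 | h2 <;>
      simp [h1, h2]
  rw [Finset.sum_congr rfl (fun t _ => this t)]
  simp

lemma diff_eq {T : ℕ} (hT : 2 ≤ T) (ω : Fin T → Fin 2) :
    |(transCount ω 0 1 : ℤ) - (transCount ω 1 0 : ℤ)| ≤ 1 := by
  set G : ℕ → ℤ := fun k => if h : k < T then ((ω ⟨k, h⟩ : ℕ) : ℤ) else 0 with hG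
  have key : (transCount ω 0 1 : ℤ) - (transCount ω 1 0 : ℤ)
      = ∑ t ∈ Finset.range (T - 1), (G (t + 1) - G t) := by
    unfold transCount
    rw [Finset.card_filter, Finset.card_filter]
    push_cast
    rw [← Finset.sum_sub_distrib]
    rw [Finset.sum_congr rfl (fun (t : Fin (T-1)) _ =>
      (by
        have h1 : t.1 < T := by omega
        have h2 : t.1 + 1 < T := by omega
        simp only [hG, dif_pos h1, dif_pos h2]
        rcases fin2_cases (ω ⟨t.1, h1⟩) with ha | ha <;>
          rcases fin2_cases (ω ⟨t.1 + 1, h2⟩) with hb | hb <;>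
          simp [ha, hb] :
        ((if ω ⟨t.1, by omega⟩ = 0 ∧ ω ⟨t.1 + 1, by omega⟩ = 1 then (1:ℤ) else 0) -
         (if ω ⟨t.1, by omega⟩ = 1 ∧ ω ⟨t.1 + 1, by omega⟩ = 0 then (1:ℤ) else 0)) =
        G (t.1 + 1) - G t.1))]
    exact (Finset.sum_range fun t => G (t + 1) - G t).symm
  rw [key, Finset.sum_range_sub]
  have hb : ∀ k, 0 ≤ G k ∧ G k ≤ 1 := by
    intro k
    simp only [hG]
    split
    · constructor
      · positivity
      · exact_mod_cast Fin.is_le _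
    · simp
  have h1 := hb (T - 1)
  have h2 := hb 0
  rw [abs_le]
  omega

/-- forward direction: for any contingency table `x` of paths of
length `T` over two states with total frequency `n`, one has
`b₁₁ + b₁₂ + b₂₁ + b₂₂ = n (T-1)` and `|b₁₂ - b₂₁| ≤ n`.
(State `0` is the paper's `1`, state `1` is the paper's `2`.) -/
theorem stmt16 {T : ℕ} (hT : 2 ≤ T) (x : (Fin T → Fin 2) → ℕ) :
    transTotal x 0 0 + transTotal x 0 1 + transTotal x 1 0 + transTotal x 1 1 =
      (∑ ω : Fin T → Fin 2, x ω) * (T - 1) ∧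
    |(transTotal x 0 1 : ℤ) - (transTotal x 1 0 : ℤ)| ≤
      (∑ ω : Fin T → Fin 2, x ω : ℤ) := by
  constructor
  · unfold transTotal
    rw [Finset.sum_mul]
    simp only [← Finset.sum_add_distrib]
    refine Finset.sum_congr rfl fun ω _ => ?_
    rw [← Nat.mul_add, ← Nat.mul_add, ← Nat.mul_add, sum4 ω]
  · unfold transTotal
    push_cast
    rw [← Finset.sum_sub_distrib]
    calc |∑ ω : Fin T → Fin 2, ((x ω : ℤ) * transCount ω 0 1 - (x ω : ℤ) * transCount ω 1 0)|
        ≤ ∑ ω : Fin T → Fin 2, |(x ω : ℤ) * transCount ω 0 1 - (x ω : ℤ) * transCount ω 1 0| :=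
          Finset.abs_sum_le_sum_abs _ _
      _ ≤ ∑ ω : Fin T → Fin 2, (x ω : ℤ) := by
          refine Finset.sum_le_sum fun ω _ => ?_
          rw [← mul_sub, abs_mul, abs_of_nonneg (by positivity : (0:ℤ) ≤ (x ω : ℤ))]
          calc (x ω : ℤ) * |(transCount ω 0 1 : ℤ) - (transCount ω 1 0 : ℤ)|
              ≤ (x ω : ℤ) * 1 := by
                exact mul_le_mul_of_nonneg_left (diff_eq hT ω) (by positivity)
            _ = (x ω : ℤ) := mul_one _
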